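/- arXiv:2206.08113 — 12 statements merged into one kernel-verified Lean document; each statement's English description precedes it below -/
import Mathlib

section
/- An ortholattice L is a Boolean algebra if and only if for all a, b ∈ L, a ∧ b = 0 implies a ≤ b^⊥. -/
/-- An ortholattice (a bounded lattice with an antitone involutive orthocomplementation
satisfying De Morgan's laws and the complement laws) is a Boolean algebra (i.e. distributive)
iff disjointness implies orthogonality. -/
theorem ortholattice_boolean_iff {L : Type*} [Lattice L] [BoundedOrder L]
    (oc : L → L)
    (hanti : ∀ x y : L, x ≤ y → oc y ≤ oc x)
    (hinv : ∀ x : L, oc (oc x) = x)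
    (hbot : oc (⊥ : L) = ⊤) (htop : oc (⊤ : L) = ⊥)
    (hdm1 : ∀ x y : L, oc (x ⊔ y) = oc x ⊓ oc y)
    (hdm2 : ∀ x y : L, oc (x ⊓ y) = oc x ⊔ oc y)
    (hmeet : ∀ x : L, x ⊓ oc x = ⊥)
    (hjoin : ∀ x : L, x ⊔ oc x = ⊤) :
    (∀ x y z : L, x ⊓ (y ⊔ z) = (x ⊓ y) ⊔ (x ⊓ z)) ↔
      (∀ a b : L, a ⊓ b = ⊥ → a ≤ oc b) := by
  constructor
  · intro hd a b hab
    have : a = a ⊓ oc b := by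
      calc a = a ⊓ ⊤ := (inf_top_eq a).symm
        _ = a ⊓ (b ⊔ oc b) := by rw [hjoin]
        _ = (a ⊓ b) ⊔ (a ⊓ oc b) := hd a b (oc b)
        _ = a ⊓ oc b := by rw [hab, bot_sup_eq]
    exact this.le.trans inf_le_right
  · intro H x y z
    -- key lemma: a ≤ (a ⊓ b) ⊔ (a ⊓ oc b)
    have key : ∀ a b : L, a ≤ (a ⊓ b) ⊔ (a ⊓ oc b) := by
      intro a b
      set c := (a ⊓ b) ⊔ (a ⊓ oc b) with hc
      have h1 : (a ⊓ oc c) ⊓ b = ⊥ := by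
        apply le_antisymm _ bot_le
        have hle1 : (a ⊓ oc c) ⊓ b ≤ c := le_sup_left.trans' (le_inf (inf_le_left.trans inf_le_left) inf_le_right)
        have hle2 : (a ⊓ oc c) ⊓ b ≤ oc c := inf_le_left.trans inf_le_right
        calc (a ⊓ oc c) ⊓ b ≤ c ⊓ oc c := le_inf hle1 hle2
          _ = ⊥ := hmeet c
      have h2 : (a ⊓ oc c) ⊓ oc b = ⊥ := by
        apply le_antisymm _ bot_le
        have hle1 : (a ⊓ oc c) ⊓ oc b ≤ c := le_sup_right.trans' (le_inf (inf_le_left.trans inf_le_left) inf_le_right)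
        have hle2 : (a ⊓ oc c) ⊓ oc b ≤ oc c := inf_le_left.trans inf_le_right
        calc (a ⊓ oc c) ⊓ oc b ≤ c ⊓ oc c := le_inf hle1 hle2
          _ = ⊥ := hmeet c
      have hb1 : a ⊓ oc c ≤ oc b := H _ _ h1
      have hb2 : a ⊓ oc c ≤ b := (hinv b) ▸ H _ _ h2
      have h3 : a ⊓ oc c = ⊥ := by
        apply le_antisymm _ bot_le
        calc a ⊓ oc c ≤ b ⊓ oc b := le_inf hb2 hb1
          _ = ⊥ := hmeet b
      have := H a (oc c) h3
      rwa [hinv] at this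
    apply le_antisymm
    · -- x ⊓ (y ⊔ z) ≤ (x ⊓ y) ⊔ (x ⊓ z)
      set a := x ⊓ (y ⊔ z) with ha
      have step1 : a ≤ (a ⊓ y) ⊔ (a ⊓ oc y) := key a y
      have step2 : a ⊓ oc y ≤ ((a ⊓ oc y) ⊓ z) ⊔ ((a ⊓ oc y) ⊓ oc z) := key (a ⊓ oc y) z
      have h4 : (a ⊓ oc y) ⊓ oc z = ⊥ := by
        apply le_antisymm _ bot_le
        calc (a ⊓ oc y) ⊓ oc z = a ⊓ (oc y ⊓ oc z) := inf_assoc ..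
          _ = a ⊓ oc (y ⊔ z) := by rw [hdm1]
          _ ≤ (y ⊔ z) ⊓ oc (y ⊔ z) := inf_le_inf_right _ inf_le_right
          _ = ⊥ := hmeet _
      have step3 : a ⊓ oc y ≤ (a ⊓ oc y) ⊓ z := by
        rw [h4, sup_bot_eq] at step2; exact step2
      calc a ≤ (a ⊓ y) ⊔ (a ⊓ oc y) := step1
        _ ≤ (x ⊓ y) ⊔ (x ⊓ z) := by
            apply sup_le_sup
            · exact inf_le_inf_right _ inf_le_left
            · exact step3.trans (inf_le_inf (inf_le_left.trans inf_le_left) le_rfl)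
    · exact sup_le (inf_le_inf_left _ le_sup_left) (inf_le_inf_left _ le_sup_right)
end

section
/- Let X₁, X₂ be Dacey subsets of an orthogonality space (O, ⊥) such that every element of X₁ is orthogonal to every element of X₂. If X₁ ∪ X₂ is orthoclosed, then X₁ ∪ X₂ is Dacey. -/
/-- The polar (orthocomplement) of a subset: all elements orthogonal to every element of `X`. -/
def pol {O : Type*} (r : O → O → Prop) (X : Set O) : Set O := {y | ∀ x ∈ X, r y x}

/-- A set is orthoclosed if it equals its double polar. -/
def IsOC {O : Type*} (r : O → O → Prop) (X : Set O) : Prop := pol r (pol r X) = X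

/-- A basis of `X`: a maximal pairwise orthogonal subset of `X`. -/
def IsBasis {O : Type*} (r : O → O → Prop) (X B : Set O) : Prop :=
  B ⊆ X ∧ B.Pairwise r ∧ ∀ C : Set O, B ⊆ C → C ⊆ X → C.Pairwise r → C = B

/-- A Dacey set: orthoclosed and recovered as the double polar of each of its bases. -/
def IsDacey {O : Type*} (r : O → O → Prop) (X : Set O) : Prop :=
  IsOC r X ∧ ∀ B : Set O, IsBasis r X B → pol r (pol r B) = X


/-! A basis `B` of `X₁ ∪ X₂` splits into bases `B ∩ X₁` and `B ∩ X₂` of the two mutually orthogonal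
parts: a larger orthogonal set `C ⊇ B ∩ X₁` inside `X₁` could be joined with `B ∩ X₂` to enlarge `B`.
Since `X₁` and `X₂` are Dacey, `B⊥⊥` contains `(B ∩ X₁)⊥⊥ ∪ (B ∩ X₂)⊥⊥ = X₁ ∪ X₂`, and the reverse
inclusion holds because `X₁ ∪ X₂` is orthoclosed. -/

section Orthogonality

variable {O : Type*} {r : O → O → Prop}

theorem pol_anti {S T : Set O} (h : S ⊆ T) : pol r T ⊆ pol r S :=
  fun _ hy x hx => hy x (h hx)

theorem pol_pol_mono {S T : Set O} (h : S ⊆ T) : pol r (pol r S) ⊆ pol r (pol r T) :=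
  pol_anti (pol_anti h)

theorem IsBasis.inter_left [Std.Symm r] {X₁ X₂ B : Set O}
    (horth : ∀ x ∈ X₁, ∀ y ∈ X₂, r x y) (hB : IsBasis r (X₁ ∪ X₂) B) :
    IsBasis r X₁ (B ∩ X₁) := by
  obtain ⟨hBX, hBpw, hBmax⟩ := hB
  refine ⟨Set.inter_subset_right, hBpw.mono Set.inter_subset_left, fun C hBC hCX hCpw => ?_⟩
  have hpw : (C ∪ B ∩ X₂).Pairwise r := by
    rw [Set.pairwise_union_of_symm]
    exact ⟨hCpw, hBpw.mono Set.inter_subset_left, fun a ha b hb _ => horth a (hCX ha) b hb.2⟩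
  have hB_sub : B ⊆ C ∪ B ∩ X₂ := fun x hx =>
    (hBX hx).elim (fun h => Or.inl (hBC ⟨hx, h⟩)) (fun h => Or.inr ⟨hx, h⟩)
  have hCB : C ∪ B ∩ X₂ = B :=
    hBmax _ hB_sub (Set.union_subset_union hCX Set.inter_subset_right) hpw
  exact Set.Subset.antisymm (fun x hx => ⟨hCB ▸ Or.inl hx, hCX hx⟩) hBC

theorem IsBasis.inter_right [Std.Symm r] {X₁ X₂ B : Set O}
    (horth : ∀ x ∈ X₁, ∀ y ∈ X₂, r x y) (hB : IsBasis r (X₁ ∪ X₂) B) :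
    IsBasis r X₂ (B ∩ X₂) :=
  IsBasis.inter_left (fun y hy x hx => symm_of r (horth x hx y hy)) (Set.union_comm X₁ X₂ ▸ hB)

end Orthogonality

theorem union_of_dacey_is_dacey_general {O : Type*} (r : O → O → Prop)
    (hsymm : Symmetric r) (X₁ X₂ : Set O)
    (h₁ : IsDacey r X₁) (h₂ : IsDacey r X₂)
    (horth : ∀ x ∈ X₁, ∀ y ∈ X₂, r x y)
    (hoc : IsOC r (X₁ ∪ X₂)) :
    IsDacey r (X₁ ∪ X₂) := by
  have : Std.Symm r := ⟨hsymm⟩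
  refine ⟨hoc, fun B hB => Set.Subset.antisymm ?_ ?_⟩
  · exact hoc ▸ pol_pol_mono hB.1
  · rw [← h₁.2 _ (hB.inter_left horth), ← h₂.2 _ (hB.inter_right horth)]
    exact Set.union_subset (pol_pol_mono Set.inter_subset_left) (pol_pol_mono Set.inter_subset_left)

theorem union_of_dacey_is_dacey {O : Type*} (r : O → O → Prop)
    (hsymm : Symmetric r) (hirr : Irreflexive r) (X₁ X₂ : Set O)
    (h₁ : IsDacey r X₁) (h₂ : IsDacey r X₂)
    (horth : ∀ x ∈ X₁, ∀ y ∈ X₂, r x y)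
    (hoc : IsOC r (X₁ ∪ X₂)) :
    IsDacey r (X₁ ∪ X₂) :=
  union_of_dacey_is_dacey_general r hsymm X₁ X₂ h₁ h₂ horth hoc
end

section
/- Let P be a poset and let B = {[a₁<a₂], …, [a_{2n-1}<a_{2n}]} be a finite pairwise orthogonal subset of Q(P). Then the elements a₁, a₂, …, a_{2n} are pairwise comparable in P. -/
/-- The proper quotients of a poset `P`: pairs `(a,b)` with `a < b`. -/
abbrev Quot1 (P : Type*) [PartialOrder P] : Type _ := {p : P × P // p.1 < p.2}

/-- `[a<b] ⊥ [c<d]` iff `b ≤ c` or `d ≤ a`. -/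
def perpQ {P : Type*} [PartialOrder P] (q₁ q₂ : Quot1 P) : Prop :=
  q₁.1.2 ≤ q₂.1.1 ∨ q₂.1.2 ≤ q₁.1.1

/-- The partial order on proper quotients: `[u<v] ≤ [a<b]` iff `a ≤ u` and `v ≤ b`. -/
def leQ {P : Type*} [PartialOrder P] (q₁ q₂ : Quot1 P) : Prop :=
  q₂.1.1 ≤ q₁.1.1 ∧ q₁.1.2 ≤ q₂.1.2

/-- `τ(U)`: quotients whose top endpoint lies in `U`. -/
def tau {P : Type*} [PartialOrder P] (U : Set P) : Set (Quot1 P) := {q | q.1.2 ∈ U}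

/-- `β(U)`: quotients whose bottom endpoint lies in `U`. -/
def beta {P : Type*} [PartialOrder P] (U : Set P) : Set (Quot1 P) := {q | q.1.1 ∈ U}

theorem pairwise_orthogonal_endpoints_comparable {P : Type*} [PartialOrder P]
    (B : Set (Quot1 P)) (hfin : B.Finite) (hB : B.Pairwise perpQ)
    (q₁ q₂ : Quot1 P) (h₁ : q₁ ∈ B) (h₂ : q₂ ∈ B)
    (x y : P) (hx : x = q₁.1.1 ∨ x = q₁.1.2) (hy : y = q₂.1.1 ∨ y = q₂.1.2) :
    x ≤ y ∨ y ≤ x := by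
  rcases eq_or_ne q₁ q₂ with rfl | hne
  · rcases hx with rfl | rfl <;> rcases hy with rfl | rfl
    · exact Or.inl le_rfl
    · exact Or.inl q₁.2.le
    · exact Or.inr q₁.2.le
    · exact Or.inl le_rfl
  · rcases hB h₁ h₂ hne with h | h
    · left
      have hx' : x ≤ q₁.1.2 := by rcases hx with rfl | rfl; exact q₁.2.le; rfl
      have hy' : q₂.1.1 ≤ y := by rcases hy with rfl | rfl; rfl; exact q₂.2.le
      exact hx'.trans (h.trans hy')
    · right
      have hy' : y ≤ q₂.1.2 := by rcases hy with rfl | rfl; exact q₂.2.le; rfl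
      have hx' : q₁.1.1 ≤ x := by rcases hx with rfl | rfl; rfl; exact q₁.2.le
      exact hy'.trans (h.trans hx')
end

section
/- Let P be a poset. Every orthoclosed subset of the orthogonality space (Q(P), ⊥) is a lower set in the partial order on Q(P) given by [a<b] ≤ [c<d] iff c ≤ a and b ≤ d. -/
theorem orthoclosed_is_lower_set {P : Type*} [PartialOrder P]
    (X : Set (Quot1 P)) (hX : IsOC perpQ X)
    (q q' : Quot1 P) (hq : q ∈ X) (h : leQ q' q) : q' ∈ X := by
  rw [← hX]
  intro x hx
  rcases hx q hq with h1 | h1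
  · exact Or.inr (le_trans h1 h.1)
  · exact Or.inl (le_trans h.2 h1)
end

section
/- Let P be a lower-bounded poset (with least element 0) and let I be a lower set of P. Then τ(I)^⊥ = β(I^↑), where I^↑ is the set of upper bounds of I. -/
theorem pol_tau_eq_beta_upperBounds {P : Type*} [PartialOrder P] [OrderBot P]
    (I : Set P) (hI : IsLowerSet I) :
    pol perpQ (tau I) = beta (upperBounds I) := by
  ext q
  constructor
  · intro hq i hi
    rcases eq_or_ne i ⊥ with rfl | hne
    · exact bot_le
    · have hlt : (⊥ : P) < i := bot_lt_iff_ne_bot.mpr hne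
      rcases hq ⟨(⊥, i), hlt⟩ hi with h | h
      · exact absurd (le_bot_iff.mp h ▸ q.2) (by simp [le_bot_iff.mp h])
      · exact h
  · intro hq x hx
    exact Or.inr (hq hx)
end

section
/- Let P be a bounded poset and let I be a lower set of P. Then τ(I)^⊥⊥ = τ(I^↑↓), where I^↑↓ denotes the set of lower bounds of the set of upper bounds of I. -/
theorem tau_double_pol {P : Type*} [PartialOrder P] [BoundedOrder P]
    (I : Set P) (hI : IsLowerSet I) :
    pol perpQ (pol perpQ (tau I)) = tau (lowerBounds (upperBounds I)) := by
  ext q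
  obtain ⟨⟨x, y⟩, hxy⟩ := q
  simp only [pol, tau, Set.mem_setOf_eq]
  constructor
  · intro h u hu
    by_cases h1 : u = (⊤ : P)
    · exact h1 ▸ le_top
    · have hu1 : u < (⊤ : P) := lt_of_le_of_ne le_top h1
      have hmem : (⟨(u, ⊤), hu1⟩ : Quot1 P) ∈ pol perpQ (tau I) := by
        intro p hp
        exact Or.inr (hu hp)
      rcases h _ hmem with h2 | h2
      · exact h2
      · exact (lt_irrefl x (hxy.trans_le ((le_top : y ≤ ⊤).trans h2))).elim
  · intro hy p hp
    left
    refine hy ?_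
    intro b hb
    by_cases hb0 : b = (⊥ : P)
    · exact hb0 ▸ bot_le
    · have hb1 : (⊥ : P) < b := lt_of_le_of_ne bot_le (Ne.symm hb0)
      rcases hp ⟨(⊥, b), hb1⟩ hb with h2 | h2
      · exact (lt_irrefl _ (p.2.trans_le (h2.trans bot_le))).elim
      · exact h2
end

section
/- Let P be a bounded poset. For every [x<y] ∈ Q(P), the double orthocomplement {[x<y]}^⊥⊥ equals the principal lower set [x<y]^↓ = {[u<v] ∈ Q(P) : x ≤ u and v ≤ y}. -/
theorem double_pol_singleton_eq_principal_lower {P : Type*} [PartialOrder P] [BoundedOrder P]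
    (q : Quot1 P) :
    pol perpQ (pol perpQ {q}) = {q' : Quot1 P | q.1.1 ≤ q'.1.1 ∧ q'.1.2 ≤ q.1.2} := by
  ext z
  simp only [pol, perpQ, Set.mem_setOf_eq, Set.mem_singleton_iff, forall_eq]
  constructor
  · intro h
    constructor
    · rcases eq_or_ne q.1.1 ⊥ with hb | hb
      · rw [hb]; exact bot_le
      · have hy : (⊥ : P) < q.1.1 := lt_of_le_of_ne bot_le (Ne.symm hb)
        have := h ⟨(⊥, q.1.1), hy⟩ (Or.inl le_rfl)
        rcases this with h1 | h1
        · exact absurd (lt_of_lt_of_le z.2 h1) (by simp)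
        · exact h1
    · rcases eq_or_ne q.1.2 ⊤ with ht | ht
      · rw [ht]; exact le_top
      · have hy : q.1.2 < (⊤ : P) := lt_of_le_of_ne le_top ht
        have := h ⟨(q.1.2, ⊤), hy⟩ (Or.inr le_rfl)
        rcases this with h1 | h1
        · exact h1
        · exact absurd (lt_of_le_of_lt h1 z.2) (by simp)
  · rintro ⟨h1, h2⟩ y hy
    rcases hy with hy | hy
    · exact Or.inr (hy.trans h1)
    · exact Or.inl (h2.trans hy)
end

section
/- Let P be a bounded poset and [x<y] ∈ Q(P). Then the principal lower set [x<y]^↓ = {[u<v] : x ≤ u, v ≤ y} is a Dacey subset of (Q(P), ⊥), assuming P (or at least the interval [x,y]) satisfies appropriate chain conditions so that bases are finite; in particular for finite P, [x<y]^↓ is Dacey. -/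
/-!
Let `X = [x<y]^↓`. Its polar consists of the quotients lying entirely below `x` or above `y`;
using `[⊥<x]` and `[y<⊤]` one sees that `X` is orthoclosed. For Dacey-ness it suffices that
every basis `B` of `X` has `B^⊥ ⊆ X^⊥`. If `[c<d] ∈ B^⊥` met `X`, it would split `B` into the
quotients below `c` and those above `d`. Pairwise orthogonal quotients are linearly arranged, so
with `m` the largest top of the lower part (or `x`) and `M` the smallest bottom of the upper part
(or `y`), the quotient `[m<M]` lies in `X`, is orthogonal to all of `B` and is not in `B`,
contradicting maximality.
-/

theorem IsChain.exists_isGreatest_of_finite {α : Type*} [Preorder α] {s : Set α}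
    (hc : IsChain (· ≤ ·) s) (hs : s.Finite) (hne : s.Nonempty) : ∃ a, IsGreatest s a :=
  let ⟨a, ha⟩ := hs.exists_maximal hne
  ⟨a, hc.directedOn.maximal_iff_isGreatest.1 ha⟩

theorem IsChain.exists_isLeast_of_finite {α : Type*} [Preorder α] {s : Set α}
    (hc : IsChain (· ≤ ·) s) (hs : s.Finite) (hne : s.Nonempty) : ∃ a, IsLeast s a :=
  IsChain.exists_isGreatest_of_finite (α := αᵒᵈ) hc.symm hs hne

section Polarity

variable {O : Type*} {r : O → O → Prop} {X Y B : Set O}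

theorem pol_anti_s12 (h : X ⊆ Y) : pol r Y ⊆ pol r X :=
  fun _ hz x hx => hz x (h hx)

theorem subset_pol_pol [Std.Symm r] : X ⊆ pol r (pol r X) :=
  fun _ hx _ hy => Std.Symm.symm _ _ (hy _ hx)

theorem IsBasis.mem_of_forall_perp (hB : IsBasis r X B) {s : O} (hs : s ∈ X)
    (hsB : ∀ b ∈ B, s ≠ b → r s b ∧ r b s) : s ∈ B :=
  hB.2.2 (insert s B) (Set.subset_insert s B) (Set.insert_subset hs hB.1)
    (Set.pairwise_insert.2 ⟨hB.2.1, hsB⟩) ▸ Set.mem_insert s B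

theorem IsOC.isDacey (hX : IsOC r X) (h : ∀ B, IsBasis r X B → pol r B ⊆ pol r X) :
    IsDacey r X :=
  ⟨hX, fun B hB => by rw [(h B hB).antisymm (pol_anti_s12 hB.1)]; exact hX⟩

end Polarity

section Quotients

variable {P : Type*} [PartialOrder P]

instance : Std.Symm (perpQ (P := P)) :=
  ⟨fun _ _ => Or.symm⟩

def downQ (q : Quot1 P) : Set (Quot1 P) := {q' | leQ q' q}

theorem mem_pol_downQ_iff {q t : Quot1 P} :
    t ∈ pol perpQ (downQ q) ↔ t.1.2 ≤ q.1.1 ∨ q.1.2 ≤ t.1.1 :=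
  ⟨fun ht => ht q ⟨le_rfl, le_rfl⟩, by
    rintro (h | h) s hs
    exacts [Or.inl (h.trans hs.1), Or.inr (hs.2.trans h)]⟩

theorem isOC_downQ [BoundedOrder P] (q : Quot1 P) : IsOC perpQ (downQ q) := by
  refine (Set.Subset.antisymm (fun s hs => ⟨?_, ?_⟩) subset_pol_pol)
  · rcases (bot_le (a := q.1.1)).eq_or_lt with hx | hx
    · exact hx ▸ bot_le
    · have := hs ⟨(⊥, q.1.1), hx⟩ (mem_pol_downQ_iff.2 (Or.inl le_rfl))
      exact this.resolve_left fun h => (s.2.trans_le h).not_ge bot_le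
  · rcases (le_top (a := q.1.2)).eq_or_lt with hy | hy
    · exact hy ▸ le_top
    · have := hs ⟨(q.1.2, ⊤), hy⟩ (mem_pol_downQ_iff.2 (Or.inr le_rfl))
      exact this.resolve_right fun h => (h.trans_lt s.2).not_ge le_top

theorem isChain_snd_image {B : Set (Quot1 P)} (hB : B.Pairwise perpQ) :
    IsChain (· ≤ ·) ((fun b : Quot1 P => b.1.2) '' B) := by
  rintro _ ⟨a, ha, rfl⟩ _ ⟨b, hb, rfl⟩ hne
  rcases hB ha hb (fun h => hne (h ▸ rfl)) with h | h
  exacts [Or.inl (h.trans b.2.le), Or.inr (h.trans a.2.le)]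

theorem isChain_fst_image {B : Set (Quot1 P)} (hB : B.Pairwise perpQ) :
    IsChain (· ≤ ·) ((fun b : Quot1 P => b.1.1) '' B) := by
  rintro _ ⟨a, ha, rfl⟩ _ ⟨b, hb, rfl⟩ hne
  rcases hB ha hb (fun h => hne (h ▸ rfl)) with h | h
  exacts [Or.inl (a.2.le.trans h), Or.inr (b.2.le.trans h)]

theorem exists_isGreatest_insert_snd_image {B : Set (Quot1 P)} (hfin : B.Finite)
    (hB : B.Pairwise perpQ) {x : P} (hx : ∀ b ∈ B, x ≤ b.1.1) :
    ∃ m, IsGreatest (insert x ((fun b : Quot1 P => b.1.2) '' B)) m := by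
  refine ((isChain_snd_image hB).insert ?_).exists_isGreatest_of_finite
    ((hfin.image _).insert x) (Set.insert_nonempty _ _)
  rintro _ ⟨b, hb, rfl⟩ -
  exact Or.inl ((hx b hb).trans b.2.le)

theorem exists_isLeast_insert_fst_image {B : Set (Quot1 P)} (hfin : B.Finite)
    (hB : B.Pairwise perpQ) {y : P} (hy : ∀ b ∈ B, b.1.2 ≤ y) :
    ∃ M, IsLeast (insert y ((fun b : Quot1 P => b.1.1) '' B)) M := by
  refine ((isChain_fst_image hB).insert ?_).exists_isLeast_of_finite
    ((hfin.image _).insert y) (Set.insert_nonempty _ _)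
  rintro _ ⟨b, hb, rfl⟩ -
  exact Or.inr (b.2.le.trans (hy b hb))

theorem pol_subset_pol_downQ_of_isBasis {q : Quot1 P} {B : Set (Quot1 P)}
    (hB : IsBasis perpQ (downQ q) B) (hfin : B.Finite) :
    pol perpQ B ⊆ pol perpQ (downQ q) := by
  obtain ⟨⟨x, y⟩, hxy⟩ := q
  rintro ⟨⟨c, d⟩, hcd⟩ ht
  refine mem_pol_downQ_iff.2 (or_iff_not_and_not.2 fun ⟨hdx, hyc⟩ => ?_)
  set L := {b ∈ B | b.1.2 ≤ c}
  set U := {b ∈ B | d ≤ b.1.1}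
  obtain ⟨m, hmL, hLm⟩ := exists_isGreatest_insert_snd_image (B := L)
    (hfin.subset (Set.sep_subset _ _)) (hB.2.1.mono (Set.sep_subset _ _)) (x := x)
    fun b hb => (hB.1 hb.1).1
  obtain ⟨M, hMU, hUM⟩ := exists_isLeast_insert_fst_image (B := U)
    (hfin.subset (Set.sep_subset _ _)) (hB.2.1.mono (Set.sep_subset _ _)) (y := y)
    fun b hb => (hB.1 hb.1).2
  have hm : (m ≤ x ∨ m ≤ c) ∧ m ≤ y := by
    rcases hmL with rfl | ⟨b, hb, rfl⟩
    exacts [⟨Or.inl le_rfl, hxy.le⟩, ⟨Or.inr hb.2, (hB.1 hb.1).2⟩]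
  have hM : (y ≤ M ∨ d ≤ M) ∧ x ≤ M := by
    rcases hMU with rfl | ⟨b, hb, rfl⟩
    exacts [⟨Or.inl le_rfl, hxy.le⟩, ⟨Or.inr hb.2, (hB.1 hb.1).1⟩]
  have hgap : m < M ∧ ¬ d ≤ m ∧ ¬ M ≤ c := by
    rcases hm.1 with h | h <;> rcases hM.1 with h' | h' <;> refine ⟨?_, ?_, ?_⟩ <;> order
  have hsB : ⟨(m, M), hgap.1⟩ ∈ B := by
    refine hB.mem_of_forall_perp ⟨hLm (Set.mem_insert _ _), hUM (Set.mem_insert _ _)⟩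
      fun b hb _ => ?_
    rcases ht b hb with h | h
    · have := hUM (Set.mem_insert_of_mem _ ⟨b, ⟨hb, h⟩, rfl⟩)
      exact ⟨Or.inl this, Or.inr this⟩
    · have := hLm (Set.mem_insert_of_mem _ ⟨b, ⟨hb, h⟩, rfl⟩)
      exact ⟨Or.inr this, Or.inl this⟩
  exact (ht _ hsB).elim hgap.2.1 hgap.2.2

end Quotients

theorem principal_lower_is_dacey {P : Type*} [PartialOrder P] [BoundedOrder P] [Fintype P]
    (q : Quot1 P) :
    IsDacey perpQ {q' : Quot1 P | q.1.1 ≤ q'.1.1 ∧ q'.1.2 ≤ q.1.2} :=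
  (isOC_downQ q).isDacey fun _ hB => pol_subset_pol_downQ_of_isBasis hB (Set.toFinite _)
end

section
/- Let P be a lattice and X an orthoclosed subset of Q(P). If [a<b], [c<d] ∈ X and [a<b] is not orthogonal to [c<d], then {[a<b],[c<d]}^⊥ = β((b∨d)^↑) ∪ τ((a∧c)^↓) and [a∧c < b∨d] ∈ X. -/
theorem pol_pair_and_join_mem {P : Type*} [Lattice P]
    (X : Set (Quot1 P)) (hX : IsOC perpQ X)
    (q₁ q₂ : Quot1 P) (hq₁ : q₁ ∈ X) (hq₂ : q₂ ∈ X) (hnp : ¬ perpQ q₁ q₂) :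
    pol perpQ {q₁, q₂} =
      beta (Set.Ici (q₁.1.2 ⊔ q₂.1.2)) ∪ tau (Set.Iic (q₁.1.1 ⊓ q₂.1.1)) ∧
    ∃ h : q₁.1.1 ⊓ q₂.1.1 < q₁.1.2 ⊔ q₂.1.2,
      (⟨(q₁.1.1 ⊓ q₂.1.1, q₁.1.2 ⊔ q₂.1.2), h⟩ : Quot1 P) ∈ X := by
  simp only [perpQ, not_or] at hnp
  obtain ⟨hbc, hda⟩ := hnp
  have hlt : q₁.1.1 ⊓ q₂.1.1 < q₁.1.2 ⊔ q₂.1.2 :=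
    lt_of_le_of_lt inf_le_left (lt_of_lt_of_le q₁.2 le_sup_left)
  have hpol : pol perpQ {q₁, q₂} =
      beta (Set.Ici (q₁.1.2 ⊔ q₂.1.2)) ∪ tau (Set.Iic (q₁.1.1 ⊓ q₂.1.1)) := by
    ext y
    constructor
    · intro hy
      have h1 : perpQ y q₁ := hy q₁ (Or.inl rfl)
      have h2 : perpQ y q₂ := hy q₂ (Or.inr rfl)
      rcases h1 with h1 | h1 <;> rcases h2 with h2 | h2
      · exact Or.inr (le_inf h1 h2)
      · exact absurd (le_trans h2 (le_trans (le_of_lt y.2) h1)) hda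
      · exact absurd (le_trans h1 (le_trans (le_of_lt y.2) h2)) hbc
      · exact Or.inl (sup_le h1 h2)
    · rintro (hy | hy) x hx
      · rcases hx with rfl | rfl
        · exact Or.inr (le_trans le_sup_left hy)
        · exact Or.inr (le_trans le_sup_right hy)
      · rcases hx with rfl | rfl
        · exact Or.inl (le_trans hy inf_le_left)
        · exact Or.inl (le_trans hy inf_le_right)
  refine ⟨hpol, hlt, ?_⟩
  rw [← hX]
  intro y hy
  have hy' : y ∈ pol perpQ {q₁, q₂} := by
    intro x hx
    rcases hx with rfl | rfl
    · exact hy x hq₁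
    · exact hy x hq₂
  rw [hpol] at hy'
  rcases hy' with h | h
  · exact Or.inl h
  · exact Or.inr h
end

section
/- Let P be a poset and X an orthoclosed subset of Q(P). If [p<q₂], [q₁<r] ∈ X with q₁ ≤ q₂ and p < r, then [p<r] ∈ X. -/
theorem merge_touching {P : Type*} [PartialOrder P]
    (X : Set (Quot1 P)) (hX : IsOC perpQ X)
    (p q₁ q₂ r : P) (h₁ : p < q₂) (h₂ : q₁ < r)
    (hm₁ : (⟨(p, q₂), h₁⟩ : Quot1 P) ∈ X) (hm₂ : (⟨(q₁, r), h₂⟩ : Quot1 P) ∈ X)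
    (hq : q₁ ≤ q₂) (hpr : p < r) :
    (⟨(p, r), hpr⟩ : Quot1 P) ∈ X := by
  rw [← hX]
  intro y hy
  have a := hy _ hm₁
  have b := hy _ hm₂
  rcases a with a | a
  · exact Or.inr a
  · rcases b with b | b
    · exact absurd (lt_of_lt_of_le y.2 (b.trans (hq.trans a))) (lt_irrefl _)
    · exact Or.inl b
end

section
/- Let P be a finite bounded poset. If P is a lattice, then every orthoclosed subset of Q(P) is of chain type. -/
/-- `q` is a maximal element of `X` with respect to the order on proper quotients. -/
def IsMaxIn {P : Type*} [PartialOrder P] (X : Set (Quot1 P)) (q : Quot1 P) : Prop :=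
  q ∈ X ∧ ∀ q' ∈ X, leQ q q' → q' = q

/-- A lower subset of `Quot1 P` is of chain type if any two distinct maximal elements
`[a<b]`, `[c<d]` satisfy `b < c` or `d < a`. -/
def IsChainType {P : Type*} [PartialOrder P] (X : Set (Quot1 P)) : Prop :=
  (∀ q ∈ X, ∀ q' : Quot1 P, leQ q' q → q' ∈ X) ∧
  ∀ q₁ q₂ : Quot1 P, IsMaxIn X q₁ → IsMaxIn X q₂ → q₁ ≠ q₂ →
    (q₁.1.2 < q₂.1.1 ∨ q₂.1.2 < q₁.1.1)

theorem orthoclosed_is_chain_type_of_lattice {P : Type*} [PartialOrder P] [BoundedOrder P]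
    [Fintype P]
    (hlub : ∀ a b : P, ∃ s, IsLUB {a, b} s) (hglb : ∀ a b : P, ∃ i, IsGLB {a, b} i)
    (X : Set (Quot1 P)) (hX : IsOC perpQ X) :
    IsChainType X := by

  have hmem : ∀ q : Quot1 P, (∀ z ∈ pol perpQ X, perpQ q z) → q ∈ X := by
    intro q h
    rw [← hX]
    exact h
  constructor
  · intro q hq q' hle
    apply hmem
    intro z hz
    rcases hz q hq with hA | hB
    · right; exact hA.trans hle.1
    · left; exact hle.2.trans hB
  · intro q₁ q₂ h₁ h₂ hne
    obtain ⟨hq₁X, hmax₁⟩ := h₁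
    obtain ⟨hq₂X, hmax₂⟩ := h₂
    have hab : q₁.1.1 < q₁.1.2 := q₁.2
    have hcd : q₂.1.1 < q₂.1.2 := q₂.2
    by_contra hcon
    push_neg at hcon
    obtain ⟨h1, h2⟩ := hcon
    have hperp : q₁.1.2 ≤ q₂.1.1 ∨ q₂.1.2 ≤ q₁.1.1 := by
      by_contra hp
      push_neg at hp
      obtain ⟨hbc, hda⟩ := hp
      obtain ⟨s, hs⟩ := hlub q₁.1.2 q₂.1.2
      obtain ⟨i, hi⟩ := hglb q₁.1.1 q₂.1.1
      have hia : i ≤ q₁.1.1 := hi.1 (by simp)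
      have hic : i ≤ q₂.1.1 := hi.1 (by simp)
      have hbs : q₁.1.2 ≤ s := hs.1 (by simp)
      have hds : q₂.1.2 ≤ s := hs.1 (by simp)
      have his : i < s := lt_of_le_of_lt hia (lt_of_lt_of_le hab hbs)
      have hqm : (⟨(i, s), his⟩ : Quot1 P) ∈ X := by
        apply hmem
        intro z hz
        rcases hz q₁ hq₁X with hA | hB
        · rcases hz q₂ hq₂X with hC | hD
          · right
            exact hi.2 (by rintro x (rfl | rfl) <;> assumption)
          · exact absurd (hD.trans (z.2.le.trans hA)) hda
        · rcases hz q₂ hq₂X with hC | hD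
          · exact absurd (hB.trans (z.2.le.trans hC)) hbc
          · left
            exact hs.2 (by rintro x (rfl | rfl) <;> assumption)
      exact hne ((hmax₁ _ hqm ⟨hia, hbs⟩).symm.trans (hmax₂ _ hqm ⟨hic, hds⟩))
    rcases hperp with hbc | hda
    · have heq : q₁.1.2 = q₂.1.1 := (hbc.lt_or_eq).resolve_left h1
      have had : q₁.1.1 < q₂.1.2 := hab.trans (heq ▸ hcd)
      have hq3 : (⟨(q₁.1.1, q₂.1.2), had⟩ : Quot1 P) ∈ X := by
        apply hmem
        intro z hz
        rcases hz q₁ hq₁X with hA | hB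
        · right; exact hA
        · rcases hz q₂ hq₂X with hC | hD
          · exact absurd (hB.trans_lt (z.2.trans_le (hC.trans heq.ge))) (lt_irrefl _)
          · left; exact hD
      have := hmax₁ _ hq3 ⟨le_refl _, (heq.le.trans_lt hcd).le⟩
      have hd : q₂.1.2 = q₁.1.2 := by
        have h := congrArg (fun q : Quot1 P => q.1.2) this
        exact h
      exact absurd hd.symm (ne_of_lt (heq.le.trans_lt hcd))
    · have heq : q₂.1.2 = q₁.1.1 := (hda.lt_or_eq).resolve_left h2
      have hcb : q₂.1.1 < q₁.1.2 := hcd.trans (heq ▸ hab)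
      have hq3 : (⟨(q₂.1.1, q₁.1.2), hcb⟩ : Quot1 P) ∈ X := by
        apply hmem
        intro z hz
        rcases hz q₂ hq₂X with hC | hD
        · right; exact hC
        · rcases hz q₁ hq₁X with hA | hB
          · exact absurd (hD.trans_lt (z.2.trans_le (hA.trans heq.ge))) (lt_irrefl _)
          · left; exact hB
      have := hmax₂ _ hq3 ⟨le_refl _, (heq.le.trans_lt hab).le⟩
      have hb : q₁.1.2 = q₂.1.2 := by
        have h := congrArg (fun q : Quot1 P => q.1.2) this
        exact h
      exact absurd hb (ne_of_gt (heq.le.trans_lt hab))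
end

section
/- Let P be a bounded poset. The map τ sending a closed lower set I (i.e., I = I^↑↓) to τ(I) = {[a<b] ∈ Q(P) : b ∈ I} is an injective morphism of complete lattices from the Dedekind–MacNeille completion of P into the complete lattice of orthoclosed subsets of Q(P); it preserves arbitrary meets and arbitrary joins and the bounds. -/
/-- A closed lower set: an element of the Dedekind–MacNeille completion of . -/
def IsDMClosed {P : Type*} [Preorder P] (I : Set P) : Prop :=
  I = lowerBounds (upperBounds I)

lemma pol_tau {P : Type*} [PartialOrder P] [BoundedOrder P] (I : Set P) :
    pol perpQ (tau I) = beta (upperBounds I) := by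
  ext q
  constructor
  · intro h b hb
    rcases eq_or_lt_of_le (bot_le : (⊥ : P) ≤ b) with hb' | hb'
    · exact hb' ▸ bot_le
    · rcases h ⟨(⊥, b), hb'⟩ hb with h1 | h2
      · exact absurd (lt_of_lt_of_le q.2 (show q.1.2 ≤ (⊥ : P) from h1)) not_lt_bot
      · exact h2
  · intro h q' hq'
    exact Or.inr (h hq')

lemma pol_beta {P : Type*} [PartialOrder P] [BoundedOrder P] (S : Set P) :
    pol perpQ (beta S) = tau (lowerBounds S) := by
  ext q
  constructor
  · intro h b hb
    rcases eq_or_lt_of_le (le_top : b ≤ (⊤ : P)) with hb' | hb'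
    · exact hb' ▸ le_top
    · rcases h ⟨(b, ⊤), hb'⟩ hb with h1 | h2
      · exact h1
      · exact absurd (lt_of_le_of_lt (show (⊤ : P) ≤ q.1.1 from h2) q.2) not_top_lt
  · intro h q' hq'
    exact Or.inl (h hq')

lemma tau_subset {P : Type*} [PartialOrder P] [BoundedOrder P] {I J : Set P}
    (hJ : IsDMClosed J) (h : tau I ⊆ tau J) : I ⊆ J := by
  intro b hb
  rcases eq_or_lt_of_le (bot_le : (⊥ : P) ≤ b) with hb' | hb'
  · subst hb'
    rw [hJ]
    intro x _
    exact bot_le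
  · exact h (show (⟨(⊥, b), hb'⟩ : Quot1 P) ∈ tau I from hb)

theorem tau_embeds_macneille_completion {P : Type*} [PartialOrder P] [BoundedOrder P] :
    -- injectivity
    (∀ I J : Set P, IsDMClosed I → IsDMClosed J → tau I = tau J → I = J) ∧
    -- lands in orthoclosed sets
    (∀ I : Set P, IsDMClosed I → IsOC perpQ (tau I)) ∧
    -- preserves the bounds
    tau (lowerBounds (Set.univ : Set P)) = pol perpQ (pol perpQ (∅ : Set (Quot1 P))) ∧
    tau (Set.univ : Set P) = (Set.univ : Set (Quot1 P)) ∧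
    -- preserves arbitrary meets (intersections)
    (∀ (H : Type) (I : H → Set P), (∀ j, IsDMClosed (I j)) →
      tau (⋂ j, I j) = ⋂ j, tau (I j)) ∧
    -- preserves arbitrary joins
    (∀ (H : Type) (I : H → Set P), (∀ j, IsDMClosed (I j)) →
      tau (lowerBounds (upperBounds (⋃ j, I j))) =
        pol perpQ (pol perpQ (⋃ j, tau (I j)))) := by
  refine ⟨?_, ?_, ?_, ?_, ?_, ?_⟩
  · intro I J hI hJ h
    exact Set.Subset.antisymm (tau_subset hJ h.le) (tau_subset hI h.ge)
  · intro I hI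
    unfold IsOC
    rw [pol_tau, pol_beta, ← hI]
  · have : tau (∅ : Set P) = (∅ : Set (Quot1 P)) := by
      ext q; simp [tau]
    rw [← this, pol_tau, pol_beta, upperBounds_empty]
  · ext q; simp [tau]
  · intro H I _
    ext q; simp [tau]
  · intro H I _
    have : (⋃ j, tau (I j)) = tau (⋃ j, I j) := by
      ext q; simp [tau]
    rw [this, pol_tau, pol_beta]
end
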